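/- arXiv:2511.21637 — 4 statements merged into one kernel-verified Lean document; each statement's English description precedes it below -/
import Mathlib

section
/- Under the KKT conditions of the Arctic Auction convex program (conditions (3)–(8) with λ ≤ 1, s > 0 ⟹ λ = 1), if a buyer i has s_i > 0 and x_{ik} > 0 for some good k, then α_i = 1 and moreover every good j with x_{ij} > 0 satisfies p_j = u_{ij} (i.e., i buys each allocated good exactly at her price upper bound). -/
theorem stmt_3_general (nB nG : ℕ)
    (m : Fin nB → ℝ) (u : Fin nB → Fin nG → ℝ) (p : Fin nG → ℝ)
    (x : Fin nB → Fin nG → ℝ) (s : Fin nB → ℝ) (lam : ℝ)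
    (h4 : (∃ i, 0 < s i) → lam = 1)
    (h5 : ∀ i j, u i j / p j ≤ ((∑ j', u i j' * x i j') + s i) / m i)
    (h6 : ∀ i j, 0 < x i j →
      u i j / p j = ((∑ j', u i j' * x i j') + s i) / m i)
    (h8 : ∀ i, 0 < s i → lam = m i / ((∑ j', u i j' * x i j') + s i))
    (i : Fin nB) (k : Fin nG) (hsi : 0 < s i) (hik : 0 < x i k) :
    u i k / p k = 1 ∧ (∀ j, u i j / p j ≤ 1) ∧
      (∀ j, 0 < x i j → p j = u i j) := by
  have hratio : ((∑ j', u i j' * x i j') + s i) / m i = 1 := by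
    rw [← inv_div, ← h8 i hsi, h4 ⟨i, hsi⟩, inv_one]
  refine ⟨hratio ▸ h6 i k hik, fun j => hratio ▸ h5 i j, fun j hj => ?_⟩
  exact (eq_of_div_eq_one (hratio ▸ h6 i j hj)).symm

/-- In the Arctic Auction, under the KKT conditions, if buyer `i` has money
returned (`s i > 0`) and is allocated a positive amount of some good `k`,
then her maximum bang per buck is `1` (it is attained at `k` with value `1`
and no good gives bang per buck exceeding `1`), and every good allocated to
her is bought exactly at its price upper bound: `x i j > 0 → p j = u i j`. -/
theorem stmt_3 (nB nG : ℕ)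
    (m : Fin nB → ℝ) (u : Fin nB → Fin nG → ℝ) (p : Fin nG → ℝ)
    (x : Fin nB → Fin nG → ℝ) (s : Fin nB → ℝ) (lam : ℝ)
    (hm : ∀ i, 0 < m i) (hp : ∀ j, 0 < p j) (hu : ∀ i j, 0 ≤ u i j)
    (hupos : ∀ i, ∃ j, 0 < u i j)
    (hx : ∀ i j, 0 ≤ x i j) (hs : ∀ i, 0 ≤ s i)
    (hlam : lam ≤ 1)
    (h4 : (∃ i, 0 < s i) → lam = 1)
    (h5 : ∀ i j, u i j / p j ≤ ((∑ j', u i j' * x i j') + s i) / m i)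
    (h6 : ∀ i j, 0 < x i j →
      u i j / p j = ((∑ j', u i j' * x i j') + s i) / m i)
    (h7 : ∀ i, m i / ((∑ j', u i j' * x i j') + s i) ≤ lam)
    (h8 : ∀ i, 0 < s i → lam = m i / ((∑ j', u i j' * x i j') + s i))
    (i : Fin nB) (k : Fin nG) (hsi : 0 < s i) (hik : 0 < x i k) :
    u i k / p k = 1 ∧ (∀ j, u i j / p j ≤ 1) ∧
      (∀ j, 0 < x i j → p j = u i j) :=
  stmt_3_general nB nG m u p x s lam h4 h5 h6 h8 i k hsi hik
end

section
/- In a bipartite flow network N with source s, goods G (edges (s,j) of capacity p_j > 0), buyers B (edges (i,t) of capacity m_i − r_i ≥ 0), and infinite-capacity edges from goods to buyers, the cut ({s}, G ∪ B ∪ {t}) is a minimum s–t cut if and only if for every subset S ⊆ G, worth(S) := ∑_{j∈S} p_j ≤ worth(Γ(S)) := ∑_{i∈Γ(S)} (m_i − r_i), where Γ(S) ⊆ B is the set of buyers adjacent to S. -/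
/-!
A finite cut has source side `{s} ∪ S ∪ T` with `Γ(S) ⊆ T`, and its capacity exceeds that of
`({s}, G ∪ B ∪ {t})` by `∑_{i∈T} c i - ∑_{j∈S} p j`. Since capacities are nonnegative, for fixed `S`
this excess is smallest at `T = Γ(S)`, so the trivial cut is minimum iff
`∑_{j∈S} p j ≤ ∑_{i∈Γ(S)} c i` for all `S`.
-/

open scoped Classical

open Finset

section

variable {α β M : Type*}

theorem sum_univ_le_sum_compl_add_iff [Fintype α] [DecidableEq α] [AddCommGroup M]
    [PartialOrder M] [IsOrderedAddMonoid M] (f : α → M) (S : Finset α) (x : M) :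
    ∑ a, f a ≤ ∑ a ∈ Sᶜ, f a + x ↔ ∑ a ∈ S, f a ≤ x := by
  rw [← sum_add_sum_compl S f, add_comm (∑ a ∈ S, f a), add_le_add_iff_left]

theorem filter_exists_mem_subset_iff [Fintype β] (E : α → β → Prop) (S : Finset α)
    [DecidablePred fun i => ∃ j ∈ S, E j i] (T : Finset β) :
    univ.filter (fun i => ∃ j ∈ S, E j i) ⊆ T ↔ ∀ j ∈ S, ∀ i, E j i → i ∈ T := by
  simp only [subset_iff, mem_filter, mem_univ, true_and]
  exact ⟨fun h j hj i hE => h ⟨j, hj, hE⟩, fun h _ ⟨j, hj, hE⟩ => h j hj _ hE⟩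

theorem forall_le_sum_of_subset_iff [AddCommMonoid M] [PartialOrder M] [IsOrderedAddMonoid M]
    (N : Finset α → Finset β) (w : Finset α → M) (c : β → M) (hc : ∀ i, 0 ≤ c i) :
    (∀ S T, N S ⊆ T → w S ≤ ∑ i ∈ T, c i) ↔ ∀ S, w S ≤ ∑ i ∈ N S, c i :=
  ⟨fun h S => h S _ subset_rfl, fun h S _ hT =>
    (h S).trans (sum_le_sum_of_subset_of_nonneg hT fun i _ _ => hc i)⟩

end

theorem stmt_16_general (g b : ℕ) (p : Fin g → ℝ) (c : Fin b → ℝ)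
    (E : Fin g → Fin b → Prop)
    (hc : ∀ i, 0 ≤ c i) :
    (∀ (S : Finset (Fin g)) (T : Finset (Fin b)),
        (∀ j ∈ S, ∀ i, E j i → i ∈ T) →
        ∑ j, p j ≤ (∑ j ∈ Sᶜ, p j) + ∑ i ∈ T, c i)
      ↔
    (∀ S : Finset (Fin g),
        ∑ j ∈ S, p j ≤
          ∑ i ∈ Finset.univ.filter (fun i => ∃ j ∈ S, E j i), c i) := by
  simp only [sum_univ_le_sum_compl_add_iff, ← filter_exists_mem_subset_iff]
  exact forall_le_sum_of_subset_iff _ (fun S => ∑ j ∈ S, p j) c hc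

/-- In the bipartite flow network `N(p,r)` — source edges `(s,j)` of capacity
`p j > 0`, sink edges `(i,t)` of capacity `c i = m i − r i ≥ 0`, and
infinite-capacity edges from goods to buyers given by `E` — the cut
`({s}, G ∪ B ∪ {t})` (of capacity `∑ j, p j`) is a minimum s–t cut iff for
every `S ⊆ G`, `worth(S) = ∑_{j∈S} p j ≤ worth(Γ(S)) = ∑_{i∈Γ(S)} c i`.
A finite-capacity cut is described by its source side `{s} ∪ S ∪ T` with
`S ⊆ G`, `T ⊆ B` and `Γ(S) ⊆ T` (no infinite edge crosses); its capacity is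
`∑_{j∉S} p j + ∑_{i∈T} c i`. -/
theorem stmt_16 (g b : ℕ) (p : Fin g → ℝ) (c : Fin b → ℝ)
    (E : Fin g → Fin b → Prop)
    (hp : ∀ j, 0 < p j) (hc : ∀ i, 0 ≤ c i) :
    (∀ (S : Finset (Fin g)) (T : Finset (Fin b)),
        (∀ j ∈ S, ∀ i, E j i → i ∈ T) →
        ∑ j, p j ≤ (∑ j ∈ Sᶜ, p j) + ∑ i ∈ T, c i)
      ↔
    (∀ S : Finset (Fin g),
        ∑ j ∈ S, p j ≤
          ∑ i ∈ Finset.univ.filter (fun i => ∃ j ∈ S, E j i), c i) :=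
  stmt_16_general g b p c E hc
end

section
/- In the bipartite flow network N(p,r), suppose ({s}, G∪B∪{t}) is not a min s–t cut after setting buyer i's capacity to zero, and let (s ∪ S ∪ T, rest) be a maximal s–t min cut with S ⊆ G, T ⊆ B (computing worth(T) with buyer i's money set to 0). If buyer i's capacity is then set to worth(S) − worth(T) > 0, then ({s}, G∪B∪{t}) becomes an s–t min cut again, and (s ∪ S ∪ T, rest) is also a min cut (S is a tight set). -/
open scoped Classical

/-!
Raising buyer `i₀`'s capacity from `0` to `β` adds exactly `β` to the capacity of every
cut with `i₀` on the source side and leaves all other cuts unchanged. The first kind had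
capacity at least that of the min cut `(S, T)`, which `β` lifts to `∑ p`; the second kind
already had capacity at least `∑ p` by the invariant. Since `(S, T)` itself is lifted
exactly to `∑ p`, both it and the trivial cut are min cuts.
-/

namespace Finset

variable {ι M : Type*} [AddCommMonoid M] [DecidableEq ι] {s : Finset ι} {i : ι}

theorem sum_update_eq_sum_update_zero_add (h : i ∈ s) (f : ι → M) (b : M) :
    ∑ x ∈ s, Function.update f i b x = ∑ x ∈ s, Function.update f i 0 x + b := by
  rw [sum_update_of_mem h, sum_update_of_mem h, zero_add, add_comm]

theorem sum_update_eq_sum_update_of_notMem (h : i ∉ s) (f : ι → M) (a b : M) :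
    ∑ x ∈ s, Function.update f i a x = ∑ x ∈ s, Function.update f i b x := by
  rw [sum_update_of_notMem h, sum_update_of_notMem h]

end Finset

theorem stmt_17_general (g b : ℕ) (p : Fin g → ℝ) (c : Fin b → ℝ)
    (E : Fin g → Fin b → Prop) (i₀ : Fin b)
    (S : Finset (Fin g)) (T : Finset (Fin b))
    -- `c₀` : capacities with buyer `i₀`'s money set to 0
    (c₀ : Fin b → ℝ) (hc₀ : c₀ = Function.update c i₀ 0)
    -- `(S, T)` is a valid cut containing `i₀` on the source side
    (hi₀T : i₀ ∈ T)
    -- `(S, T)` is a min cut when `i₀`'s capacity is 0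
    (hmin : ∀ (S' : Finset (Fin g)) (T' : Finset (Fin b)),
        (∀ j ∈ S', ∀ i, E j i → i ∈ T') →
        (∑ j ∈ Sᶜ, p j) + ∑ i ∈ T, c₀ i ≤ (∑ j ∈ S'ᶜ, p j) + ∑ i ∈ T', c₀ i)
    -- the trivial cut `({s}, G∪B∪{t})` is not a min cut
    (hnotmin : (∑ j ∈ Sᶜ, p j) + ∑ i ∈ T, c₀ i < ∑ j, p j)
    -- Invariant before zeroing: every valid cut avoiding `i₀` has capacity `≥ ∑ p`
    (hno : ∀ (S' : Finset (Fin g)) (T' : Finset (Fin b)),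
        (∀ j ∈ S', ∀ i, E j i → i ∈ T') → i₀ ∉ T' →
        ∑ j, p j ≤ (∑ j ∈ S'ᶜ, p j) + ∑ i ∈ T', c₀ i)
    -- `β = worth(S) − worth(T)` and the new capacities `cβ`
    (β : ℝ) (hβ : β = (∑ j ∈ S, p j) - ∑ i ∈ T, c₀ i)
    (cβ : Fin b → ℝ) (hcβ : cβ = Function.update c i₀ β) :
    (0 < β) ∧
    (∀ (S' : Finset (Fin g)) (T' : Finset (Fin b)),
        (∀ j ∈ S', ∀ i, E j i → i ∈ T') →
        ∑ j, p j ≤ (∑ j ∈ S'ᶜ, p j) + ∑ i ∈ T', cβ i) ∧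
    ((∑ j ∈ Sᶜ, p j) + ∑ i ∈ T, cβ i = ∑ j, p j) := by
  subst hc₀ hcβ
  have hsplit : ∑ j ∈ Sᶜ, p j + ∑ j ∈ S, p j = ∑ j, p j := Finset.sum_compl_add_sum S p
  have htight : ∑ j ∈ Sᶜ, p j + ∑ i ∈ T, Function.update c i₀ β i = ∑ j, p j := by
    rw [Finset.sum_update_eq_sum_update_zero_add hi₀T, hβ]
    linarith
  refine ⟨by linarith, fun S' T' hcut => ?_, htight⟩
  by_cases hi : i₀ ∈ T'
  · rw [Finset.sum_update_eq_sum_update_zero_add hi]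
    linarith [hmin S' T' hcut]
  · rw [Finset.sum_update_eq_sum_update_of_notMem hi c β 0]
    exact hno S' T' hcut hi

/-- Returning partial money (Lemma `Inv-partial`). In the network `N(p,r)`
with buyer `i₀`'s sink capacity set to `0`, suppose `({s}, G∪B∪{t})` is not a
min s–t cut, and `(s ∪ S ∪ T, rest)` is a maximal min cut (so `i₀ ∈ T`, and
every cut avoiding `i₀` has capacity at least `∑ j, p j`, by the Invariant
that held before `i₀`'s capacity was zeroed). Let
`β = worth(S) − worth(T) > 0` (worth of `T` computed with `i₀`'s money `0`).
After setting buyer `i₀`'s capacity to `β`, the cut `({s}, G∪B∪{t})` is again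
a min s–t cut, and `(s ∪ S ∪ T, rest)` is also a min cut, i.e. `S` is tight. -/
theorem stmt_17 (g b : ℕ) (p : Fin g → ℝ) (c : Fin b → ℝ)
    (E : Fin g → Fin b → Prop) (i₀ : Fin b)
    (hp : ∀ j, 0 < p j) (hc : ∀ i, 0 ≤ c i)
    (S : Finset (Fin g)) (T : Finset (Fin b))
    -- `c₀` : capacities with buyer `i₀`'s money set to 0
    (c₀ : Fin b → ℝ) (hc₀ : c₀ = Function.update c i₀ 0)
    -- `(S, T)` is a valid cut containing `i₀` on the source side
    (hST : ∀ j ∈ S, ∀ i, E j i → i ∈ T) (hi₀T : i₀ ∈ T)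
    -- `(S, T)` is a min cut when `i₀`'s capacity is 0
    (hmin : ∀ (S' : Finset (Fin g)) (T' : Finset (Fin b)),
        (∀ j ∈ S', ∀ i, E j i → i ∈ T') →
        (∑ j ∈ Sᶜ, p j) + ∑ i ∈ T, c₀ i ≤ (∑ j ∈ S'ᶜ, p j) + ∑ i ∈ T', c₀ i)
    -- the trivial cut `({s}, G∪B∪{t})` is not a min cut
    (hnotmin : (∑ j ∈ Sᶜ, p j) + ∑ i ∈ T, c₀ i < ∑ j, p j)
    -- Invariant before zeroing: every valid cut avoiding `i₀` has capacity `≥ ∑ p`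
    (hno : ∀ (S' : Finset (Fin g)) (T' : Finset (Fin b)),
        (∀ j ∈ S', ∀ i, E j i → i ∈ T') → i₀ ∉ T' →
        ∑ j, p j ≤ (∑ j ∈ S'ᶜ, p j) + ∑ i ∈ T', c₀ i)
    -- `β = worth(S) − worth(T)` and the new capacities `cβ`
    (β : ℝ) (hβ : β = (∑ j ∈ S, p j) - ∑ i ∈ T, c₀ i)
    (cβ : Fin b → ℝ) (hcβ : cβ = Function.update c i₀ β) :
    (0 < β) ∧
    (∀ (S' : Finset (Fin g)) (T' : Finset (Fin b)),
        (∀ j ∈ S', ∀ i, E j i → i ∈ T') →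
        ∑ j, p j ≤ (∑ j ∈ S'ᶜ, p j) + ∑ i ∈ T', cβ i) ∧
    ((∑ j ∈ Sᶜ, p j) + ∑ i ∈ T, cβ i = ∑ j, p j) :=
  stmt_17_general g b p c E i₀ S T c₀ hc₀ hi₀T hmin hnotmin hno β hβ cβ hcβ
end

section
/- Let f and f* be maximum flows in networks N and N* respectively, where N* is obtained from N by (weakly) increasing source-edge capacities and possibly adding edges, with sink-edge capacities fixed. If for some buyer i its surplus satisfies γ_i(f*) = γ_i(f) − σ with σ > 0, and f* is a balanced flow in N* (minimizing the ℓ₂ norm of the surplus vector), then ‖γ(f*)‖₂² ≤ ‖γ(f)‖₂² − σ². -/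
/-- A bipartite flow network on goods `Fin g` and buyers `Fin b`: source-edge
capacities `a j` for goods, sink-edge capacities `cap i` for buyers, and
infinite-capacity good-to-buyer edges given by `E`. -/
structure FlowNet (g b : ℕ) where
  a : Fin g → ℝ
  cap : Fin b → ℝ
  E : Fin g → Fin b → Prop

namespace FlowNet

variable {g b : ℕ}

/-- A flow is recorded by the amounts `f j i` routed on good-to-buyer edges
(the flows on source and sink edges are determined by conservation). -/
def Feasible (N : FlowNet g b) (f : Fin g → Fin b → ℝ) : Prop :=
  (∀ j i, 0 ≤ f j i) ∧ (∀ j i, 0 < f j i → N.E j i) ∧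
  (∀ j, ∑ i, f j i ≤ N.a j) ∧ (∀ i, ∑ j, f j i ≤ N.cap i)

def value (f : Fin g → Fin b → ℝ) : ℝ := ∑ j, ∑ i, f j i

def IsMaxFlow (N : FlowNet g b) (f : Fin g → Fin b → ℝ) : Prop :=
  N.Feasible f ∧ ∀ f', N.Feasible f' → value f' ≤ value f

/-- The surplus of buyer `i` under flow `f`: the residual capacity of the
edge `(i,t)`. -/
def surplus (N : FlowNet g b) (f : Fin g → Fin b → ℝ) (i : Fin b) : ℝ :=
  N.cap i - ∑ j, f j i

/-- A balanced flow minimizes the ℓ₂ norm of the surplus vector over all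
feasible flows. -/
def IsBalanced (N : FlowNet g b) (f : Fin g → Fin b → ℝ) : Prop :=
  N.Feasible f ∧
    ∀ f', N.Feasible f' → ∑ i, (N.surplus f i) ^ 2 ≤ ∑ i, (N.surplus f' i) ^ 2

end FlowNet

/-!
Since `N*` has the larger source capacities and edge set and the same sink capacities, `f` is
feasible in `N*`, and so is every convex combination of `f` and `f*`; the surplus vector depends
affinely on the flow. Hence `γ(f*)` is the point of minimal norm on the segment from `γ(f*)` to
`γ(f)`, so `⟪γ(f*), γ(f) - γ(f*)⟫ ≥ 0` and `‖γ(f)‖² ≥ ‖γ(f*)‖² + ‖γ(f) - γ(f*)‖²`. The last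
vector has the entry `σ` at buyer `i`.
-/

open Set

section NormMinimum

variable {E : Type*} [NormedAddCommGroup E] [InnerProductSpace ℝ E]

theorem real_inner_sub_nonneg_of_forall_mem_segment {x y : E}
    (h : ∀ z ∈ segment ℝ x y, ‖x‖ ^ 2 ≤ ‖z‖ ^ 2) : 0 ≤ inner ℝ x (y - x) := by
  set c := inner ℝ x (y - x)
  set D := ‖y - x‖ ^ 2
  have hD : 0 ≤ D := sq_nonneg _
  have hstep : ∀ t ∈ Icc (0 : ℝ) 1, 0 ≤ 2 * t * c + t ^ 2 * D := by
    intro t ht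
    have hz := h _ (segment_eq_image' ℝ x y ▸ mem_image_of_mem _ ht)
    rw [norm_add_sq_real, inner_smul_right, norm_smul, mul_pow, Real.norm_eq_abs, sq_abs] at hz
    linarith
  by_contra! hc
  -- at `t = -c / (D - c) ∈ (0, 1]` the expression equals `t * c * (1 + t) < 0`
  have hpos : 0 < D - c := by linarith
  set t := -c / (D - c)
  have ht : 0 < t := div_pos (neg_pos.2 hc) hpos
  have htD : t * (D - c) = -c := div_mul_cancel₀ _ hpos.ne'
  have := hstep t ⟨ht.le, (div_le_one hpos).2 (by linarith)⟩
  nlinarith [mul_pos ht ht, mul_neg_of_pos_of_neg ht hc]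

theorem norm_sq_add_norm_sub_sq_le_of_forall_mem_segment {x y : E}
    (h : ∀ z ∈ segment ℝ x y, ‖x‖ ^ 2 ≤ ‖z‖ ^ 2) : ‖x‖ ^ 2 + ‖y - x‖ ^ 2 ≤ ‖y‖ ^ 2 := by
  have hexpand := norm_add_sq_real x (y - x)
  rw [add_sub_cancel] at hexpand
  linarith [real_inner_sub_nonneg_of_forall_mem_segment h]

end NormMinimum

namespace FlowNet

variable {g b : ℕ}

theorem Feasible.mono {N N' : FlowNet g b} {f : Fin g → Fin b → ℝ} (hf : N.Feasible f)
    (ha : ∀ j, N.a j ≤ N'.a j) (hE : ∀ j i, N.E j i → N'.E j i) (hcap : ∀ i, N.cap i ≤ N'.cap i) :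
    N'.Feasible f :=
  ⟨hf.1, fun j i h ↦ hE j i (hf.2.1 j i h), fun j ↦ (hf.2.2.1 j).trans (ha j),
    fun i ↦ (hf.2.2.2 i).trans (hcap i)⟩

theorem convex_setOf_feasible (N : FlowNet g b) : Convex ℝ {f | N.Feasible f} := by
  rintro f ⟨hf0, hfE, hfa, hfcap⟩ f' ⟨hf0', hfE', hfa', hfcap'⟩ s t hs ht hst
  have hsum : ∀ (ι : Type) [Fintype ι] (u u' : ι → ℝ) (c : ℝ), (∑ k, u k ≤ c) →
      (∑ k, u' k ≤ c) → ∑ k, (s * u k + t * u' k) ≤ c := by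
    intro ι _ u u' c hu hu'
    rw [Finset.sum_add_distrib, ← Finset.mul_sum, ← Finset.mul_sum]
    linear_combination mul_le_mul_of_nonneg_left hu hs + mul_le_mul_of_nonneg_left hu' ht
      + c * hst
  refine ⟨fun j i ↦ ?_, fun j i hpos ↦ ?_, fun j ↦ hsum _ _ _ _ (hfa j) (hfa' j),
    fun i ↦ hsum _ _ _ _ (hfcap i) (hfcap' i)⟩
  · exact add_nonneg (mul_nonneg hs (hf0 j i)) (mul_nonneg ht (hf0' j i))
  · simp only [Pi.add_apply, Pi.smul_apply, smul_eq_mul] at hpos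
    by_cases h : 0 < f j i
    · exact hfE j i h
    · exact hfE' j i (by nlinarith [hf0 j i, hf0' j i])

/-- Taken in `EuclideanSpace` so that its norm is the ℓ₂ norm of the surplus vector `γ(f)`. -/
noncomputable def surplusVec (N : FlowNet g b) (f : Fin g → Fin b → ℝ) : EuclideanSpace ℝ (Fin b) :=
  WithLp.toLp 2 (N.surplus f)

theorem norm_surplusVec_sq (N : FlowNet g b) (f : Fin g → Fin b → ℝ) :
    ‖N.surplusVec f‖ ^ 2 = ∑ i, N.surplus f i ^ 2 :=
  EuclideanSpace.real_norm_sq_eq _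

theorem surplusVec_smul_add_smul {N : FlowNet g b} (f f' : Fin g → Fin b → ℝ) {s t : ℝ} (hst : s + t = 1) :
    N.surplusVec (s • f + t • f') = s • N.surplusVec f + t • N.surplusVec f' := by
  ext i
  simp only [surplusVec, surplus, PiLp.add_apply, PiLp.smul_apply, Pi.add_apply, Pi.smul_apply,
    smul_eq_mul, Finset.sum_add_distrib, ← Finset.mul_sum]
  linear_combination -N.cap i * hst

theorem IsBalanced.norm_sq_add_norm_sub_sq_le {N : FlowNet g b} {fstar f : Fin g → Fin b → ℝ}
    (hbal : N.IsBalanced fstar) (hf : N.Feasible f) :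
    ‖N.surplusVec fstar‖ ^ 2 + ‖N.surplusVec f - N.surplusVec fstar‖ ^ 2 ≤ ‖N.surplusVec f‖ ^ 2 := by
  refine norm_sq_add_norm_sub_sq_le_of_forall_mem_segment fun z ⟨s, t, hs, ht, hst, hz⟩ ↦ ?_
  rw [← hz, ← surplusVec_smul_add_smul _ _ hst, norm_surplusVec_sq, norm_surplusVec_sq]
  exact hbal.2 _ (N.convex_setOf_feasible hbal.1 hf hs ht hst)

end FlowNet

theorem stmt_18_general (g b : ℕ) (N Nstar : FlowNet g b)
    (ha : ∀ j, N.a j ≤ Nstar.a j) (hE : ∀ j i, N.E j i → Nstar.E j i)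
    (hcap : Nstar.cap = N.cap)
    (f fstar : Fin g → Fin b → ℝ)
    (hf : N.IsMaxFlow f)
    (hbal : Nstar.IsBalanced fstar)
    (i : Fin b) (σ : ℝ)
    (hdrop : Nstar.surplus fstar i = N.surplus f i - σ) :
    ∑ i', (Nstar.surplus fstar i') ^ 2 ≤ (∑ i', (N.surplus f i') ^ 2) - σ ^ 2 := by
  have hsurplus : Nstar.surplus f = N.surplus f := by unfold FlowNet.surplus; rw [hcap]
  have hf' : Nstar.Feasible f := hf.1.mono ha hE (fun i ↦ (congrFun hcap i).ge)
  have hσ : σ ^ 2 ≤ ‖Nstar.surplusVec f - Nstar.surplusVec fstar‖ ^ 2 := by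
    have hσi : (Nstar.surplusVec f - Nstar.surplusVec fstar) i = σ := by
      simp [FlowNet.surplusVec, hsurplus, hdrop]
    calc σ ^ 2 = ‖(Nstar.surplusVec f - Nstar.surplusVec fstar) i‖ ^ 2 := by
          rw [hσi, Real.norm_eq_abs, sq_abs]
      _ ≤ _ := by gcongr; exact PiLp.norm_apply_le _ _
  have key := hbal.norm_sq_add_norm_sub_sq_le hf'
  rw [FlowNet.norm_surplusVec_sq, FlowNet.norm_surplusVec_sq, hsurplus] at key
  linarith

/-- Lemma `surplus-decrease`: let `f` and `f*` be maximum flows in `N` and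
`N*`, where `N*` is obtained from `N` by weakly increasing source capacities
and possibly adding good-to-buyer edges, with sink capacities unchanged. If
`f*` is balanced in `N*` and the surplus of some buyer `i` satisfies
`γ_i(f*) = γ_i(f) − σ` with `σ > 0`, then
`‖γ(f*)‖₂² ≤ ‖γ(f)‖₂² − σ²`. -/
theorem stmt_18 (g b : ℕ) (N Nstar : FlowNet g b)
    (ha : ∀ j, N.a j ≤ Nstar.a j) (hE : ∀ j i, N.E j i → Nstar.E j i)
    (hcap : Nstar.cap = N.cap)
    (f fstar : Fin g → Fin b → ℝ)
    (hf : N.IsMaxFlow f) (hfstar : Nstar.IsMaxFlow fstar)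
    (hbal : Nstar.IsBalanced fstar)
    (i : Fin b) (σ : ℝ) (hσ : 0 < σ)
    (hdrop : Nstar.surplus fstar i = N.surplus f i - σ) :
    ∑ i', (Nstar.surplus fstar i') ^ 2 ≤ (∑ i', (N.surplus f i') ^ 2) - σ ^ 2 :=
  stmt_18_general g b N Nstar ha hE hcap f fstar hf hbal i σ hdrop
end
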